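/- arXiv:2002.05891 — 5 statements merged into one kernel-verified Lean document; each statement's English description precedes it below -/
import Mathlib

section
/- Let V be a vector space over a field, let X ⊆ V be a set such that every subset of X of cardinality at most d+1 is linearly independent, and let q ∈ V be a nonzero vector of X-rank r, i.e., r is the minimal cardinality of a subset B ⊆ X with q ∈ span(B). Then for every integer t with r < t ≤ d+1−r, no subset A ⊆ X of cardinality t irredundantly spans q. -/
/-!
Since `|A ∪ B| ≤ t + r ≤ d + 1`, the set `A ∪ B` is linearly independent, so `q`, lying in the spans
of both `A` and `B`, lies in the span of `A ∩ B`. But `|A ∩ B| ≤ r < t = |A|`, so `A ∩ B` is a proper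
subset of `A` spanning `q`.
-/

open Submodule

/-- Coefficients over an independent set are unique, so those of a vector in both spans are
supported on `s ∩ t`. -/
theorem LinearIndepOn.id_span_inter {R M : Type*} [Semiring R] [AddCommMonoid M] [Module R M]
    {s t : Set M} (h : LinearIndepOn R id (s ∪ t)) :
    span R (s ∩ t) = span R s ⊓ span R t := by
  refine le_antisymm (le_inf (span_mono Set.inter_subset_left) (span_mono Set.inter_subset_right))
    fun x ⟨hxs, hxt⟩ => ?_
  rw [← Set.image_id s] at hxs
  rw [← Set.image_id t] at hxt
  obtain ⟨l, hls, rfl⟩ := (Finsupp.mem_span_image_iff_linearCombination R).mp hxs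
  obtain ⟨l', hl't, hll'⟩ := (Finsupp.mem_span_image_iff_linearCombination R).mp hxt
  have hl_eq : l = l' := linearIndepOn_iffₛ.mp h l
    (Finsupp.supported_mono Set.subset_union_left hls) l'
    (Finsupp.supported_mono Set.subset_union_right hl't) hll'.symm
  rw [← Set.image_id (s ∩ t)]
  exact (Finsupp.mem_span_image_iff_linearCombination R).mpr
    ⟨l, fun a ha => ⟨hls ha, hl't (hl_eq ▸ ha)⟩, rfl⟩

theorem stmt_4_general {K V : Type*} [Field K] [AddCommGroup V] [Module K V]
    (d : ℕ) (X : Set V)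
    (hX : ∀ S : Finset V, ↑S ⊆ X → S.card ≤ d + 1 →
      LinearIndependent K (fun x : (S : Set V) => (x : V)))
    (q : V) (r : ℕ)
    (B : Finset V) (hBX : ↑B ⊆ X) (hBr : B.card = r)
    (hqB : q ∈ Submodule.span K (B : Set V))
    (t : ℕ) (hrt : r < t) (htd : t ≤ d + 1 - r)
    (A : Finset V) (hAX : ↑A ⊆ X) (hAt : A.card = t) :
    ¬ (q ∈ Submodule.span K (A : Set V) ∧
       ∀ A' : Finset V, A' ⊂ A → q ∉ Submodule.span K (A' : Set V)) := by
  classical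
  rintro ⟨hqA, hirr⟩
  have hindep : LinearIndepOn K id (↑A ∪ ↑B : Set V) := by
    rw [← Finset.coe_union]
    exact hX _ (by simpa using Set.union_subset hAX hBX)
      ((Finset.card_union_le A B).trans (by omega))
  have hqAB : q ∈ span K ((A ∩ B : Finset V) : Set V) := by
    rw [Finset.coe_inter, hindep.id_span_inter]
    exact ⟨hqA, hqB⟩
  refine hirr _ (Finset.inter_subset_left.ssubset_of_ne fun hAB => ?_) hqAB
  have := Finset.card_le_card (Finset.inter_subset_right (s₁ := A) (s₂ := B))
  rw [hAB] at this
  omega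

theorem stmt_4 {K V : Type*} [Field K] [AddCommGroup V] [Module K V]
    (d : ℕ) (hd : 0 < d) (X : Set V)
    (hX : ∀ S : Finset V, ↑S ⊆ X → S.card ≤ d + 1 →
      LinearIndependent K (fun x : (S : Set V) => (x : V)))
    (q : V) (hq0 : q ≠ 0) (r : ℕ)
    (B : Finset V) (hBX : ↑B ⊆ X) (hBr : B.card = r)
    (hqB : q ∈ Submodule.span K (B : Set V))
    (hmin : ∀ C : Finset V, ↑C ⊆ X → q ∈ Submodule.span K (C : Set V) → r ≤ C.card)
    (t : ℕ) (hrt : r < t) (htd : t ≤ d + 1 - r)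
    (A : Finset V) (hAX : ↑A ⊆ X) (hAt : A.card = t) :
    ¬ (q ∈ Submodule.span K (A : Set V) ∧
       ∀ A' : Finset V, A' ⊂ A → q ∉ Submodule.span K (A' : Set V)) :=
  stmt_4_general d X hX q r B hBX hBr hqB t hrt htd A hAX hAt
end

section
/- Let K be a field and let q ∈ K^{d+1} be a nonzero vector whose rank r with respect to the moment curve X = {(1,t,…,t^d) : t ∈ K} satisfies r ≤ ⌊(d+1)/2⌋. Then for every integer t with r < t ≤ d+1−r there is no subset A ⊆ X of cardinality t that irredundantly spans q. -/
/-!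
Any `n` distinct points of the moment curve in `Kⁿ` are linearly independent (Vandermonde).
If `q` lies in the span of `r` points `B` and in the span of `t` points `A` with `r + t ≤ d + 1`,
then `B ∪ A` is independent, so the two spans meet exactly in the span of `B ∩ A`; since
`|B ∩ A| ≤ r < t`, the set `A` does not span `q` irredundantly.
-/

open Submodule

section MomentCurve

variable {K : Type*} [Field K]

def momentVector (n : ℕ) (s : K) : Fin n → K := fun j => s ^ (j : ℕ)

theorem linearIndependent_momentVector {ι : Type*} [Fintype ι] {n : ℕ}
    (hn : Fintype.card ι ≤ n) {f : ι → K} (hf : Function.Injective f) :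
    LinearIndependent K (fun i => momentVector n (f i)) := by
  let e := Fintype.equivFin ι
  rw [← linearIndependent_equiv e.symm, Fintype.linearIndependent_iff]
  intro c hc
  have hc_zero : c = 0 := by
    refine Matrix.eq_zero_of_forall_pow_sum_mul_pow_eq_zero (hf.comp e.symm.injective) fun j => ?_
    simpa [momentVector] using congrFun hc (Fin.castLE hn j)
  simp [hc_zero]

theorem linearIndepOn_of_subset_range_momentVector {n : ℕ} {S : Finset (Fin n → K)}
    (hS : (S : Set (Fin n → K)) ⊆ Set.range (momentVector n)) (hcard : S.card ≤ n) :
    LinearIndepOn K id (S : Set (Fin n → K)) := by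
  choose g hg using fun x : ↥(S : Set (Fin n → K)) => hS x.2
  have hg_inj : Function.Injective g := fun x y hxy => Subtype.ext <| by rw [← hg x, ← hg y, hxy]
  have := linearIndependent_momentVector (by simpa using hcard) hg_inj
  simp only [hg] at this
  exact this

end MomentCurve

theorem LinearIndepOn.mem_span_inter {R M : Type*} [Ring R] [AddCommGroup M] [Module R M]
    {s t : Set M} (h : LinearIndepOn R id (s ∪ t)) {x : M} (hs : x ∈ span R s)
    (ht : x ∈ span R t) : x ∈ span R (s ∩ t) := by
  have h_disj : Disjoint (span R (s \ t)) (span R t) :=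
    ((linearIndepOn_id_union_iff Set.disjoint_sdiff_left).1 (by rwa [Set.sdiff_union_self])).2.2
  rw [← Set.sdiff_union_inter s t, span_union] at hs
  obtain ⟨y, hy, z, hz, rfl⟩ := mem_sup.1 hs
  have hyt : y ∈ span R t := by
    simpa using sub_mem ht (span_mono Set.inter_subset_right hz)
  rwa [disjoint_def.1 h_disj y hy hyt, zero_add]

theorem stmt_6_general {K : Type*} [Field K] (d : ℕ) :
    ∀ (X : Set (Fin (d + 1) → K)),
      X = {w | ∃ s : K, w = fun j : Fin (d + 1) => s ^ (j : ℕ)} →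
      ∀ (q : Fin (d + 1) → K), q ≠ 0 →
      ∀ r : ℕ, r ≤ (d + 1) / 2 →
      (∃ B : Finset (Fin (d + 1) → K), ↑B ⊆ X ∧ B.card = r ∧
        q ∈ Submodule.span K (B : Set (Fin (d + 1) → K))) →
      (∀ C : Finset (Fin (d + 1) → K), ↑C ⊆ X →
        q ∈ Submodule.span K (C : Set (Fin (d + 1) → K)) → r ≤ C.card) →
      ∀ t : ℕ, r < t → t ≤ d + 1 - r →
      ∀ A : Finset (Fin (d + 1) → K), ↑A ⊆ X → A.card = t →
      ¬ (q ∈ Submodule.span K (A : Set (Fin (d + 1) → K)) ∧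
         ∀ A' : Finset (Fin (d + 1) → K), A' ⊂ A →
           q ∉ Submodule.span K (A' : Set (Fin (d + 1) → K))) := by
  classical
  rintro X rfl q - r - ⟨B, hBX, rfl, hBq⟩ - t hrt htd A hAX rfl ⟨hAq, hirr⟩
  have h_indep : LinearIndepOn K id (↑(B ∪ A) : Set (Fin (d + 1) → K)) := by
    refine linearIndepOn_of_subset_range_momentVector (fun x hx => ?_) ?_
    · obtain ⟨s, rfl⟩ := Set.union_subset hBX hAX (by simpa using hx)
      exact ⟨s, rfl⟩
    · have := Finset.card_union_le B A; omega
  have h_inter : q ∈ span K ((B ∩ A : Finset _) : Set (Fin (d + 1) → K)) := by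
    rw [Finset.coe_union] at h_indep
    rw [Finset.coe_inter]; exact h_indep.mem_span_inter hBq hAq
  refine hirr _ (Finset.inter_subset_right.ssubset_of_ne fun h => ?_) h_inter
  have := Finset.card_le_card (Finset.inter_subset_left (s₁ := B) (s₂ := A))
  rw [h] at this; omega

theorem stmt_6 {K : Type*} [Field K] (d : ℕ)
    (hcard : (d + 1 : Cardinal) ≤ Cardinal.mk K) :
    ∀ (X : Set (Fin (d + 1) → K)),
      X = {w | ∃ s : K, w = fun j : Fin (d + 1) => s ^ (j : ℕ)} →
      ∀ (q : Fin (d + 1) → K), q ≠ 0 →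
      ∀ r : ℕ, r ≤ (d + 1) / 2 →
      (∃ B : Finset (Fin (d + 1) → K), ↑B ⊆ X ∧ B.card = r ∧
        q ∈ Submodule.span K (B : Set (Fin (d + 1) → K))) →
      (∀ C : Finset (Fin (d + 1) → K), ↑C ⊆ X →
        q ∈ Submodule.span K (C : Set (Fin (d + 1) → K)) → r ≤ C.card) →
      ∀ t : ℕ, r < t → t ≤ d + 1 - r →
      ∀ A : Finset (Fin (d + 1) → K), ↑A ⊆ X → A.card = t →
      ¬ (q ∈ Submodule.span K (A : Set (Fin (d + 1) → K)) ∧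
         ∀ A' : Finset (Fin (d + 1) → K), A' ⊂ A →
           q ∉ Submodule.span K (A' : Set (Fin (d + 1) → K))) :=
  stmt_6_general d
end

section
/- Let M be an m×n matrix over a field K of rank r ≥ 1, and suppose M = Σ_{i=1}^r u_i v_i^T. Then each u_i lies in the column space of M and each v_i lies in the row space of M. -/
/-! Every column of `∑ i, u i v iᵀ` is a combination of the `u i`, so the column space of `M`,
of dimension `r`, lies in the span of the `r` vectors `u i` and hence equals it. Transposing
gives the statement for the `v i` and the row space. -/

open Matrix Submodule Module

theorem Submodule.mem_of_le_span_of_card_le_finrank {K V ι : Type*} [Field K] [AddCommGroup V]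
    [Module K V] [Fintype ι] {W : Submodule K V} {u : ι → V}
    (hle : W ≤ span K (Set.range u)) (hcard : Fintype.card ι ≤ finrank K W) (i : ι) :
    u i ∈ W := by
  have : FiniteDimensional K (span K (Set.range u)) := .span_of_finite K (Set.finite_range u)
  have heq : W = span K (Set.range u) :=
    eq_of_le_of_finrank_le hle ((finrank_range_le_card u).trans hcard)
  exact heq ▸ subset_span ⟨i, rfl⟩

theorem Matrix.transpose_sum_vecMulVec_apply {K m n ι : Type*} [CommSemiring K] [Fintype ι]
    (u : ι → m → K) (v : ι → n → K) (j : n) :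
    (∑ i, vecMulVec (u i) (v i))ᵀ j = ∑ i, v i j • u i := by
  funext k
  simp [vecMulVec, Matrix.sum_apply, mul_comm]

theorem Matrix.span_cols_sum_vecMulVec_le {K m n ι : Type*} [CommSemiring K] [Fintype ι]
    (u : ι → m → K) (v : ι → n → K) :
    span K (Set.range (∑ i, vecMulVec (u i) (v i))ᵀ) ≤ span K (Set.range u) := by
  rw [span_le]
  rintro _ ⟨j, rfl⟩
  rw [transpose_sum_vecMulVec_apply]
  exact sum_mem fun i _ => smul_mem _ _ (subset_span ⟨i, rfl⟩)

theorem Matrix.mem_span_cols_of_eq_sum_vecMulVec {K m n ι : Type*} [Field K] [Fintype n]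
    [Fintype ι] {M : Matrix m n K} (hrank : M.rank = Fintype.card ι)
    {u : ι → m → K} {v : ι → n → K} (hM : M = ∑ i, vecMulVec (u i) (v i)) (i : ι) :
    u i ∈ span K (Set.range Mᵀ) := by
  refine mem_of_le_span_of_card_le_finrank (hM ▸ span_cols_sum_vecMulVec_le u v) ?_ i
  rw [← hrank, rank_eq_finrank_span_cols]
  rfl

theorem stmt_8_general {K : Type*} [Field K] (m n r : ℕ)
    (M : Matrix (Fin m) (Fin n) K) (hrank : M.rank = r)
    (u : Fin r → Fin m → K) (v : Fin r → Fin n → K)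
    (hM : M = ∑ i : Fin r, Matrix.vecMulVec (u i) (v i)) :
    (∀ i, u i ∈ Submodule.span K (Set.range M.transpose)) ∧
    (∀ i, v i ∈ Submodule.span K (Set.range M)) := by
  have hrank' : M.rank = Fintype.card (Fin r) := by rw [hrank, Fintype.card_fin]
  have hMt : Mᵀ = ∑ i, vecMulVec (v i) (u i) := by
    simp only [hM, transpose_sum, transpose_vecMulVec]
  have hrankt : Mᵀ.rank = Fintype.card (Fin r) := by rw [rank_transpose, hrank']
  exact ⟨mem_span_cols_of_eq_sum_vecMulVec hrank' hM,
    transpose_transpose M ▸ mem_span_cols_of_eq_sum_vecMulVec hrankt hMt⟩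

theorem stmt_8 {K : Type*} [Field K] (m n r : ℕ) (hr : 1 ≤ r)
    (M : Matrix (Fin m) (Fin n) K) (hrank : M.rank = r)
    (u : Fin r → Fin m → K) (v : Fin r → Fin n → K)
    (hM : M = ∑ i : Fin r, Matrix.vecMulVec (u i) (v i)) :
    (∀ i, u i ∈ Submodule.span K (Set.range M.transpose)) ∧
    (∀ i, v i ∈ Submodule.span K (Set.range M)) :=
  stmt_8_general m n r M hrank u v hM
end

section
/- Let K be an infinite field, let H ⊊ K^n be a proper linear subspace, and let M ∈ K^{m×n} be a nonzero matrix of rank r all of whose rows lie in H. Then there exist r+1 rank-one matrices R_i = u_i v_i^T, i = 1,…,r+1, such that M ∈ span{R_1,…,R_{r+1}}, M is not in the span of any proper subset of {R_1,…,R_{r+1}}, and at least one v_i ∉ H. -/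
/-!
Write `M = ∑_{i<r} u_i v_iᵀ` with independent `u_i` and with `v_i` in the row space of `M`,
hence in `H`. Pick `w ∉ H` and a functional `f` vanishing on `H` with `f w = 1`. Then
`M = ∑_i u_i (v_i + w)ᵀ + (-∑_i u_i) wᵀ`, and applying `f` to every row kills `M` while
sending each of these `r + 1` rank-one terms to its left factor. The linear relations among
`u_1, …, u_r, -∑ u_i` are exactly those with all coefficients equal, so an expression of `M`
that omits one term has all coefficients zero, which would force `M = 0`.
-/

open Matrix Submodule Module Set

section Irredundant

variable {R V ι : Type*} [Semiring R] [AddCommMonoid V] [Module R V] {x : V} {v : ι → V}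

theorem injective_of_forall_notMem_span_image_compl (hx : x ∈ span R (range v))
    (h : ∀ j, x ∉ span R (v '' {j}ᶜ)) : Function.Injective v := by
  intro i j hij
  by_contra hne
  refine h i (span_mono ?_ hx)
  rintro _ ⟨k, rfl⟩
  by_cases hk : k = i
  · exact ⟨j, Ne.symm hne, hk ▸ hij.symm⟩
  · exact ⟨k, hk, rfl⟩

theorem ne_zero_of_forall_notMem_span_image_compl (hx : x ∈ span R (range v))
    (h : ∀ j, x ∉ span R (v '' {j}ᶜ)) (i : ι) : v i ≠ 0 := by
  intro hi
  refine h i ?_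
  rw [← span_insert_zero]
  refine span_mono ?_ hx
  rintro _ ⟨k, rfl⟩
  by_cases hk : k = i
  · exact .inl (hk ▸ hi)
  · exact .inr ⟨k, hk, rfl⟩

theorem notMem_span_of_ssubset_range (h : ∀ j, x ∉ span R (v '' {j}ᶜ)) {S : Set V}
    (hS : S ⊂ range v) : x ∉ span R S := by
  obtain ⟨_, ⟨j, rfl⟩, hj⟩ := exists_of_ssubset hS
  refine fun hx => h j (span_mono (fun y hy => ?_) hx)
  obtain ⟨k, rfl⟩ := hS.1 hy
  exact ⟨k, fun hkj => hj (hkj ▸ hy), rfl⟩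

end Irredundant

theorem notMem_span_image_of_linearIndepOn_comp {R V W ι : Type*} [Ring R] [AddCommGroup V]
    [Module R V] [AddCommGroup W] [Module R W] {x : V} {v : ι → V} {s : Set ι}
    (φ : V →ₗ[R] W) (hx : x ≠ 0) (hφx : φ x = 0) (hs : LinearIndepOn R (φ ∘ v) s) :
    x ∉ span R (v '' s) := by
  intro hmem
  obtain ⟨l, hl, rfl⟩ := (Finsupp.mem_span_image_iff_linearCombination R).1 hmem
  rw [Finsupp.apply_linearCombination] at hφx
  rw [linearIndepOn_iff.1 hs l hl hφx, map_zero] at hx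
  exact hx rfl

section Circuit

variable {R V : Type*} [Ring R] [AddCommGroup V] [Module R V] {k : ℕ} {u : Fin k → V}

theorem LinearIndependent.eq_of_sum_smul_cons_neg_sum_eq_zero (hu : LinearIndependent R u)
    {c : Fin (k + 1) → R} (hc : ∑ i, c i • vecCons (-∑ i, u i) u i = 0) (i : Fin (k + 1)) :
    c i = c 0 := by
  have hrel : ∑ i, (c i.succ - c 0) • u i = 0 := by
    rw [← hc, Fin.sum_univ_succ]
    simp only [sub_smul, Finset.sum_sub_distrib, cons_val_zero, cons_val_succ, smul_neg,
      Finset.smul_sum]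
    abel
  cases i using Fin.cases with
  | zero => rfl
  | succ i => exact sub_eq_zero.1 (Fintype.linearIndependent_iff.1 hu _ hrel i)

theorem LinearIndependent.linearIndepOn_cons_neg_sum_compl (hu : LinearIndependent R u)
    (j : Fin (k + 1)) : LinearIndepOn R (vecCons (-∑ i, u i) u) {j}ᶜ := by
  refine linearIndepOn_iff.2 fun l hl hl0 => ?_
  rw [Finsupp.linearCombination_apply, Finsupp.sum_fintype _ _ (by simp)] at hl0
  have hconst := hu.eq_of_sum_smul_cons_neg_sum_eq_zero hl0
  have hj : l j = 0 := (Finsupp.mem_supported' R l).1 hl j (by simp)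
  ext i
  rw [hconst, ← hconst j, hj, Finsupp.coe_zero, Pi.zero_apply]

end Circuit

section RankOne

variable {K : Type*} [Field K] {m n : Type*} [Fintype m] [Fintype n]

theorem linearIndependent_of_rank_sum_vecMulVec {ι : Type*} [Fintype ι] {u : ι → m → K}
    {v : ι → n → K} (h : (∑ i, vecMulVec (u i) (v i)).rank = Fintype.card ι) :
    LinearIndependent K u := by
  have hcols : range (∑ i, vecMulVec (u i) (v i)).col ⊆ span K (range u) := by
    rintro _ ⟨j, rfl⟩
    have : (∑ i, vecMulVec (u i) (v i)).col j = ∑ i, v i j • u i := by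
      ext a; simp [Matrix.sum_apply, Finset.sum_apply, vecMulVec_apply, mul_comm]
    rw [this]
    exact sum_mem fun i _ => smul_mem _ _ (subset_span ⟨i, rfl⟩)
  refine linearIndependent_iff_card_eq_finrank_span.2 (le_antisymm ?_ (finrank_range_le_card u))
  rw [← h, rank_eq_finrank_span_cols]
  exact finrank_mono (span_le.2 hcols)

theorem Matrix.exists_eq_sum_vecMulVec_of_rank_eq (A : Matrix m n K) {r : ℕ} (hr : A.rank = r) :
    ∃ (u : Fin r → m → K) (v : Fin r → n → K),
      A = ∑ i, vecMulVec (u i) (v i) ∧ ∀ i, v i ∈ span K (range A.row) := by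
  have hrow : ∀ a, A a ∈ span K (range A.row) := fun a => subset_span ⟨a, rfl⟩
  let b : Basis (Fin r) K (span K (range A.row)) :=
    finBasisOfFinrankEq K _ (by rw [← rank_eq_finrank_span_row, hr])
  refine ⟨fun i a => b.repr ⟨A a, hrow a⟩ i, fun i => b i, ?_, fun i => (b i).2⟩
  ext a j
  have hA : A a = ∑ i, b.repr ⟨A a, hrow a⟩ i • (b i : n → K) := by
    simpa only [coe_sum, coe_smul] using congrArg Subtype.val (b.sum_repr ⟨A a, hrow a⟩).symm
  rw [congrFun hA j]
  simp [Matrix.sum_apply, Finset.sum_apply, vecMulVec_apply]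

end RankOne

theorem sum_vecMulVec_cons_neg_sum {α m n : Type*} [Ring α] {k : ℕ} (u : Fin k → m → α)
    (v : Fin k → n → α) (w : n → α) :
    ∑ i, vecMulVec (vecCons (-∑ i, u i) u i) (vecCons w (fun i => v i + w) i) =
      ∑ i, vecMulVec (u i) (v i) := by
  have hsum : vecMulVec (∑ i, u i) w = ∑ i, vecMulVec (u i) w := by
    ext a j; simp [vecMulVec_apply, Matrix.sum_apply, Finset.sum_mul]
  simp only [Fin.sum_univ_succ, cons_val_zero, cons_val_succ, neg_vecMulVec, vecMulVec_add,
    Finset.sum_add_distrib, hsum]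
  abel

theorem LinearMap.compLeft_vecMulVec {R m n : Type*} [CommSemiring R] (f : (n → R) →ₗ[R] R)
    (x : m → R) (y : n → R) :
    f.compLeft m (vecMulVec x y) = f y • x := by
  funext a
  show f (x a • y) = f y * x a
  rw [map_smul, smul_eq_mul, mul_comm]

theorem Submodule.exists_le_ker_and_apply_eq_one_of_notMem {K V : Type*} [Field K]
    [AddCommGroup V] [Module K V] {H : Submodule K V} {w : V} (hw : w ∉ H) :
    ∃ f : Dual K V, H ≤ LinearMap.ker f ∧ f w = 1 := by
  obtain ⟨f, hfw, hfH⟩ := H.exists_dual_map_eq_bot_of_notMem hw inferInstance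
  refine ⟨(f w)⁻¹ • f, fun x hx => ?_, inv_mul_cancel₀ hfw⟩
  have hfx : f x ∈ H.map f := mem_map_of_mem hx
  rw [hfH, mem_bot] at hfx
  simp [hfx]

theorem stmt_12_general {K : Type*} [Field K] (m n : ℕ)
    (H : Submodule K (Fin n → K)) (hH : H ≠ ⊤)
    (M : Matrix (Fin m) (Fin n) K) (hM : M ≠ 0)
    (hrows : ∀ a : Fin m, M a ∈ H) (r : ℕ) (hr : M.rank = r) :
    ∃ (u : Fin (r + 1) → Fin m → K) (v : Fin (r + 1) → Fin n → K),
      Function.Injective (fun i => Matrix.vecMulVec (u i) (v i)) ∧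
      (∀ i, Matrix.vecMulVec (u i) (v i) ≠ 0) ∧
      M ∈ Submodule.span K (Set.range fun i => Matrix.vecMulVec (u i) (v i)) ∧
      (∀ S : Set (Matrix (Fin m) (Fin n) K),
        S ⊂ Set.range (fun i => Matrix.vecMulVec (u i) (v i)) →
        M ∉ Submodule.span K S) ∧
      ∃ i, v i ∉ H := by
  obtain ⟨w, -, hw⟩ := SetLike.exists_of_lt hH.lt_top
  obtain ⟨f, hfH, hfw⟩ := H.exists_le_ker_and_apply_eq_one_of_notMem hw
  obtain ⟨u, v, hMuv, hvM⟩ := M.exists_eq_sum_vecMulVec_of_rank_eq hr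
  have hu : LinearIndependent K u :=
    linearIndependent_of_rank_sum_vecMulVec (by rw [← hMuv, hr, Fintype.card_fin])
  set u' := vecCons (-∑ i, u i) u
  set v' := vecCons w (fun i => v i + w)
  set R := fun i => vecMulVec (u' i) (v' i)
  have hfv' : ∀ i, f (v' i) = 1 := Fin.cases hfw fun i => by
    have hvH : v i ∈ H := span_le.2 (range_subset_iff.2 hrows) (hvM i)
    simp [v', hfw, LinearMap.mem_ker.1 (hfH hvH)]
  have hfR : f.compLeft (Fin m) ∘ R = u' := by
    funext i
    change f.compLeft (Fin m) (vecMulVec (u' i) (v' i)) = u' i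
    rw [LinearMap.compLeft_vecMulVec, hfv', one_smul]
  have hfM : f.compLeft (Fin m) M = 0 := funext fun a => hfH (hrows a)
  have hspan : M ∈ span K (range R) := by
    rw [hMuv, ← sum_vecMulVec_cons_neg_sum u v w]
    exact sum_mem fun i _ => subset_span ⟨i, rfl⟩
  have hirr : ∀ j, M ∉ span K (R '' {j}ᶜ) := fun j =>
    notMem_span_image_of_linearIndepOn_comp _ hM hfM
      (hfR ▸ hu.linearIndepOn_cons_neg_sum_compl j)
  exact ⟨u', v', injective_of_forall_notMem_span_image_compl hspan hirr,
    ne_zero_of_forall_notMem_span_image_compl hspan hirr, hspan,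
    fun S hS => notMem_span_of_ssubset_range hirr hS, 0, by simpa [v'] using hw⟩

theorem stmt_12 {K : Type*} [Field K] [Infinite K] (m n : ℕ)
    (H : Submodule K (Fin n → K)) (hH : H ≠ ⊤)
    (M : Matrix (Fin m) (Fin n) K) (hM : M ≠ 0)
    (hrows : ∀ a : Fin m, M a ∈ H) (r : ℕ) (hr : M.rank = r) :
    ∃ (u : Fin (r + 1) → Fin m → K) (v : Fin (r + 1) → Fin n → K),
      Function.Injective (fun i => Matrix.vecMulVec (u i) (v i)) ∧
      (∀ i, Matrix.vecMulVec (u i) (v i) ≠ 0) ∧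
      M ∈ Submodule.span K (Set.range fun i => Matrix.vecMulVec (u i) (v i)) ∧
      (∀ S : Set (Matrix (Fin m) (Fin n) K),
        S ⊂ Set.range (fun i => Matrix.vecMulVec (u i) (v i)) →
        M ∉ Submodule.span K S) ∧
      ∃ i, v i ∉ H :=
  stmt_12_general m n H hH M hM hrows r hr
end

section
/- Let K be an infinite field, let V be a K-vector space of dimension a ≥ 1, let v ∈ V be nonzero, let m ≥ 1, and let o ∈ K^{m+1} be nonzero. Then there exists a set B of m+1 rank-one tensors in V ⊗ K^{m+1}, each of the form v ⊗ w_i, such that the w_i span K^{m+1}, v ⊗ o ∈ span(B), and v ⊗ o is not in the span of any proper subset of B. -/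
/-!
Every nonzero `o` is the sum of the vectors of some basis `b` of `K^{m+1}`: take a basis in which
`o` has a nonzero `j`-th coordinate and replace its `j`-th vector by `o` minus the others. Then all
coordinates of `o` in `b` equal `1`, so `o` is not in the span of any `m` of the `b i`. Since
`x ↦ v ⊗ x` is injective for `v ≠ 0`, the same holds for `v ⊗ o` and the `v ⊗ b i`.
-/

open TensorProduct

theorem TensorProduct.mk_injective_of_ne_zero {K V W : Type*} [Field K] [AddCommGroup V]
    [Module K V] [AddCommGroup W] [Module K W] {v : V} (hv : v ≠ 0) :
    Function.Injective (TensorProduct.mk K V W v) := by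
  obtain ⟨φ, hφ⟩ := Module.Projective.exists_dual_eq_one K hv
  refine Function.LeftInverse.injective (g := TensorProduct.lift ((LinearMap.lsmul K W) ∘ₗ φ)) ?_
  intro w
  simp [hφ]

namespace Module.Basis

variable {ι K M : Type*} [Field K] [AddCommGroup M] [Module K M]

theorem exists_sum_eq_of_ne_zero [Fintype ι] [DecidableEq ι] (c : Basis ι K M) {x : M}
    (hx : x ≠ 0) : ∃ b : Basis ι K M, ∑ i, b i = x := by
  obtain ⟨j, hj⟩ : ∃ j, c.repr x j ≠ 0 := by
    by_contra! h
    exact hx (c.repr.map_eq_zero_iff.mp (Finsupp.ext h))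
  set y := x - ∑ i ∈ Finset.univ.erase j, c i
  have hyj : c.repr y j = c.repr x j := by
    simp [y, Finset.sum_apply, Finsupp.single_apply]
  have hli : LinearIndependent K (Function.update c j y) :=
    c.linearIndependent.update j y ⟨1, one_mem _, c.repr y, by simpa [hyj] using hj, by simp⟩
  have : Module.Finite K M := Module.Finite.of_basis c
  refine ⟨basisOfLinearIndependentOfCardEqFinrank' _ hli (Module.finrank_eq_card_basis c).symm, ?_⟩
  simp [Finset.sum_update_of_mem, y]

theorem notMem_span_image_compl (b : Basis ι K M) {x : M} {j : ι} (hj : b.repr x j ≠ 0) :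
    x ∉ Submodule.span K (b '' {j}ᶜ) := by
  rw [b.mem_span_image]
  intro h
  exact h (Finsupp.mem_support_iff.mpr hj) rfl

theorem notMem_span_of_ssubset_range {N : Type*} [AddCommGroup N] [Module K N] (b : Basis ι K M)
    {G : M →ₗ[K] N} (hG : Function.Injective G) {x : M} (hx : ∀ i, b.repr x i ≠ 0) {B : Set N}
    (hB : B ⊂ Set.range (G ∘ b)) : G x ∉ Submodule.span K B := by
  obtain ⟨_, ⟨j, rfl⟩, hj⟩ := Set.exists_of_ssubset hB
  have hBsub : B ⊆ G '' (b '' {j}ᶜ) := by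
    intro y hy
    obtain ⟨i, rfl⟩ := hB.1 hy
    exact ⟨b i, ⟨i, fun hij => hj (hij ▸ hy), rfl⟩, rfl⟩
  intro hmem
  obtain ⟨y, hy, hGy⟩ := Submodule.mem_map.mp <|
    Submodule.span_image G ▸ Submodule.span_mono hBsub hmem
  exact b.notMem_span_image_compl (hx j) (hG hGy ▸ hy)

end Module.Basis

theorem stmt_15_general {K V : Type*} [Field K] [AddCommGroup V] [Module K V]
    (v : V) (hv : v ≠ 0) (m : ℕ)
    (o : Fin (m + 1) → K) (ho : o ≠ 0) :
    ∃ w : Fin (m + 1) → (Fin (m + 1) → K),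
      Submodule.span K (Set.range w) = ⊤ ∧
      Function.Injective (fun i => v ⊗ₜ[K] w i) ∧
      v ⊗ₜ[K] o ∈ Submodule.span K (Set.range fun i => v ⊗ₜ[K] w i) ∧
      ∀ B' : Set (V ⊗[K] (Fin (m + 1) → K)),
        B' ⊂ Set.range (fun i => v ⊗ₜ[K] w i) →
        v ⊗ₜ[K] o ∉ Submodule.span K B' := by
  obtain ⟨b, hbo⟩ := (Pi.basisFun K (Fin (m + 1))).exists_sum_eq_of_ne_zero ho
  have hcoord : ∀ i, b.repr o i ≠ 0 := by
    simp [← hbo, Finsupp.single_apply]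
  have hmk := TensorProduct.mk_injective_of_ne_zero (K := K) (W := Fin (m + 1) → K) hv
  refine ⟨b, b.span_eq, hmk.comp b.injective, ?_,
    fun B' hB' => b.notMem_span_of_ssubset_range hmk hcoord hB'⟩
  rw [← hbo, tmul_sum]
  exact Submodule.sum_mem _ fun i _ => Submodule.subset_span ⟨i, rfl⟩

theorem stmt_15 {K V : Type*} [Field K] [Infinite K] [AddCommGroup V] [Module K V]
    (v : V) (hv : v ≠ 0) (m : ℕ) (hm : 1 ≤ m)
    (o : Fin (m + 1) → K) (ho : o ≠ 0) :
    ∃ w : Fin (m + 1) → (Fin (m + 1) → K),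
      Submodule.span K (Set.range w) = ⊤ ∧
      Function.Injective (fun i => v ⊗ₜ[K] w i) ∧
      v ⊗ₜ[K] o ∈ Submodule.span K (Set.range fun i => v ⊗ₜ[K] w i) ∧
      ∀ B' : Set (V ⊗[K] (Fin (m + 1) → K)),
        B' ⊂ Set.range (fun i => v ⊗ₜ[K] w i) →
        v ⊗ₜ[K] o ∉ Submodule.span K B' :=
  stmt_15_general v hv m o ho
end
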